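/- Let E be a Banach space and K ⊆ E* a weak-*-compact set that is metrizable in the weak-* topology and nonseparable in the norm topology. Then for every ordinal α there exists ε > 0 such that s_ε^α(K) ≠ ∅ (that is, Sz(K) = ∞). -/

import Mathlib

open NormedSpace Metric
open scoped Ordinal Pointwise

noncomputable section

/-- A subset of the norm dual is weak-* open if it is open when transported to the weak-* dual. -/
def IsWeakStarOpen {E : Type*} [NormedAddCommGroup E] [NormedSpace ℝ E]
    (V : Set (StrongDual ℝ E)) : Prop :=
  IsOpen (StrongDual.toWeakDual '' V : Set (WeakDual ℝ E))

/-- A subset of the norm dual is weak-* compact if it is compact when transported to the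
weak-* dual. -/
def IsWeakStarCompact {E : Type*} [NormedAddCommGroup E] [NormedSpace ℝ E]
    (K : Set (StrongDual ℝ E)) : Prop :=
  IsCompact (StrongDual.toWeakDual '' K : Set (WeakDual ℝ E))

/-- The Szlenk derivation `s_ε(K)`. -/
def szlenkDeriv {E : Type*} [NormedAddCommGroup E] [NormedSpace ℝ E]
    (ε : ℝ) (K : Set (StrongDual ℝ E)) : Set (StrongDual ℝ E) :=
  {x | x ∈ K ∧ ∀ V : Set (StrongDual ℝ E), IsWeakStarOpen V → x ∈ V → ε < Metric.diam (K ∩ V)}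

/-- The transfinite iterates `s_ε^α(K)` of the Szlenk derivation. -/
noncomputable def szlenkIter {E : Type*} [NormedAddCommGroup E] [NormedSpace ℝ E]
    (ε : ℝ) (K : Set (StrongDual ℝ E)) (α : Ordinal) : Set (StrongDual ℝ E) :=
  Ordinal.limitRecOn α K (fun _ S => szlenkDeriv ε S)
    (fun o _ ih => ⋂ (β : Ordinal) (h : β < o), ih β h)

/-- `Sz(K) ≤ γ` : the `γ`-th Szlenk derivative of `K` is empty for every `ε > 0`. -/
def SzLE {E : Type*} [NormedAddCommGroup E] [NormedSpace ℝ E]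
    (K : Set (StrongDual ℝ E)) (γ : Ordinal) : Prop :=
  ∀ ε : ℝ, 0 < ε → szlenkIter ε K γ = ∅

/-- The image of a set under the adjoint of an operator. -/
def adjImage {E F : Type*} [NormedAddCommGroup E] [NormedSpace ℝ E]
    [NormedAddCommGroup F] [NormedSpace ℝ F] (T : E →L[ℝ] F) (K : Set (StrongDual ℝ F)) :
    Set (StrongDual ℝ E) :=
  (fun g : StrongDual ℝ F => g.comp T) '' K

/-- `Sz(T) ≤ γ` for an operator `T`. -/
def SzOpLE {E F : Type*} [NormedAddCommGroup E] [NormedSpace ℝ E]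
    [NormedAddCommGroup F] [NormedSpace ℝ F] (T : E →L[ℝ] F) (γ : Ordinal) : Prop :=
  SzLE (adjImage T (closedBall (0 : StrongDual ℝ F) 1)) γ

/-- `Sz(E) ≤ γ` for a Banach space `E`. -/
def SzSpaceLE (E : Type*) [NormedAddCommGroup E] [NormedSpace ℝ E] (γ : Ordinal) : Prop :=
  SzLE (closedBall (0 : StrongDual ℝ E) 1) γ

namespace SzAux

variable {E : Type*} [NormedAddCommGroup E] [NormedSpace ℝ E]

lemma szlenkIter_zero (ε : ℝ) (K : Set (StrongDual ℝ E)) : szlenkIter ε K 0 = K :=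
  Ordinal.limitRecOn_zero _ _ _

lemma szlenkIter_succ (ε : ℝ) (K : Set (StrongDual ℝ E)) (α : Ordinal) :
    szlenkIter ε K (Order.succ α) = szlenkDeriv ε (szlenkIter ε K α) :=
  Ordinal.limitRecOn_succ _ _ _ _

lemma szlenkIter_limit (ε : ℝ) (K : Set (StrongDual ℝ E)) {α : Ordinal} (h : Order.IsSuccLimit α) :
    szlenkIter ε K α = ⋂ (β : Ordinal) (_ : β < α), szlenkIter ε K β :=
  Ordinal.limitRecOn_limit _ _ _ _ h

lemma szlenkIter_subset (ε : ℝ) (K : Set (StrongDual ℝ E)) (α : Ordinal) :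
    szlenkIter ε K α ⊆ K := by
  induction α using Ordinal.limitRecOn with
  | zero => rw [szlenkIter_zero]
  | add_one β ih =>
      rw [Ordinal.add_one_eq_succ, szlenkIter_succ]
      exact fun x hx => ih hx.1
  | limit β hβ _ =>
      rw [szlenkIter_limit ε K hβ]
      intro x hx
      have hx0 := Set.mem_iInter₂.1 hx 0 hβ.pos
      rwa [szlenkIter_zero] at hx0

lemma szlenkDeriv_mono (ε : ℝ) {A B : Set (StrongDual ℝ E)} (h : A ⊆ B)
    (hB : Bornology.IsBounded B) : szlenkDeriv ε A ⊆ szlenkDeriv ε B := by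
  intro x hx
  refine ⟨h hx.1, fun V hV hxV => lt_of_lt_of_le (hx.2 V hV hxV) ?_⟩
  exact Metric.diam_mono (Set.inter_subset_inter_left _ h)
    (hB.subset Set.inter_subset_left)

lemma subset_szlenkIter {ε : ℝ} {K L : Set (StrongDual ℝ E)} (hKb : Bornology.IsBounded K)
    (hLK : L ⊆ K) (hL : L ⊆ szlenkDeriv ε L) (α : Ordinal) :
    L ⊆ szlenkIter ε K α := by
  induction α using Ordinal.limitRecOn with
  | zero => rw [szlenkIter_zero]; exact hLK
  | add_one β ih =>
      rw [Ordinal.add_one_eq_succ, szlenkIter_succ]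
      exact hL.trans (szlenkDeriv_mono ε ih (hKb.subset (szlenkIter_subset ε K β)))
  | limit β hβ ih =>
      rw [szlenkIter_limit ε K hβ]
      exact Set.subset_iInter₂ fun γ hγ => ih γ hγ

/-- coverable by countably many `ε`-balls. -/
def Cov (ε : ℝ) (S : Set (StrongDual ℝ E)) : Prop :=
  ∃ C : Set (StrongDual ℝ E), C.Countable ∧ S ⊆ ⋃ c ∈ C, Metric.ball c ε

lemma Cov.mono {ε : ℝ} {S T : Set (StrongDual ℝ E)} (h : S ⊆ T) (hT : Cov ε T) : Cov ε S := by
  obtain ⟨C, hC, hsub⟩ := hT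
  exact ⟨C, hC, h.trans hsub⟩

lemma Cov.union {ε : ℝ} {S T : Set (StrongDual ℝ E)} (hS : Cov ε S) (hT : Cov ε T) :
    Cov ε (S ∪ T) := by
  obtain ⟨C, hC, hsub⟩ := hS
  obtain ⟨D, hD, hsub'⟩ := hT
  refine ⟨C ∪ D, hC.union hD, Set.union_subset ?_ ?_⟩
  · exact hsub.trans (Set.biUnion_subset_biUnion_left Set.subset_union_left)
  · exact hsub'.trans (Set.biUnion_subset_biUnion_left Set.subset_union_right)

lemma cov_empty (ε : ℝ) : Cov ε (∅ : Set (StrongDual ℝ E)) :=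
  ⟨∅, Set.countable_empty, by simp⟩

lemma exists_eps_not_cov {K : Set (StrongDual ℝ E)} (h : ¬ TopologicalSpace.IsSeparable K) :
    ∃ ε : ℝ, 0 < ε ∧ ¬ Cov ε K := by
  by_contra hc
  push_neg at hc
  apply h
  choose C hC hcov using fun n : ℕ => hc (1 / (n + 1)) (by positivity)
  refine ⟨⋃ n, C n, Set.countable_iUnion hC, fun x hx => ?_⟩
  rw [Metric.mem_closure_iff]
  intro δ hδ
  obtain ⟨n, hn⟩ := exists_nat_one_div_lt hδ
  have hx' := hcov n hx
  simp only [Set.mem_iUnion, Metric.mem_ball] at hx'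
  obtain ⟨c, hc1, hc2⟩ := hx'
  exact ⟨c, Set.mem_iUnion.2 ⟨n, hc1⟩, lt_trans hc2 hn⟩

lemma isBounded_of_isWeakStarCompact [CompleteSpace E]
    {K : Set (StrongDual ℝ E)} (hK : IsWeakStarCompact K) : Bornology.IsBounded K := by
  have hpt : ∀ x : E, ∃ C, ∀ i : K, ‖(i : StrongDual ℝ E) x‖ ≤ C := by
    intro x
    have hc : IsCompact ((fun f : WeakDual ℝ E => f x) '' (StrongDual.toWeakDual '' K)) :=
      hK.image (WeakDual.eval_continuous x)
    obtain ⟨C, hC⟩ := isBounded_iff_forall_norm_le.1 hc.isBounded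
    exact ⟨C, fun i => hC _ ⟨StrongDual.toWeakDual (i : StrongDual ℝ E), ⟨(i : StrongDual ℝ E), i.2, rfl⟩, rfl⟩⟩
  obtain ⟨C', hC'⟩ := banach_steinhaus hpt
  exact isBounded_iff_forall_norm_le.2 ⟨C', fun f hf => hC' ⟨f, hf⟩⟩

end SzAux

open SzAux in
/-- If `K ⊆ E*` is weak-*-compact, metrizable in the weak-* topology and nonseparable in
the norm topology, then `Sz(K) = ∞`: for every ordinal `α` there is `ε > 0` with
`s_ε^α(K) ≠ ∅`. -/
theorem szlenkIter_nonempty_of_metrizable_nonseparable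
    {E : Type*} [NormedAddCommGroup E] [NormedSpace ℝ E] [CompleteSpace E]
    (K : Set (StrongDual ℝ E)) (hKc : IsWeakStarCompact K)
    (hmetr : TopologicalSpace.MetrizableSpace (StrongDual.toWeakDual '' K : Set (WeakDual ℝ E)))
    (hnonsep : ¬ TopologicalSpace.IsSeparable K) :
    ∀ α : Ordinal, ∃ ε : ℝ, 0 < ε ∧ (szlenkIter ε K α).Nonempty := by
  classical
  intro α
  obtain ⟨ε, hε, hKcov⟩ := exists_eps_not_cov hnonsep
  have hKb : Bornology.IsBounded K := isBounded_of_isWeakStarCompact hKc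
  set L : Set (StrongDual ℝ E) :=
    {x | x ∈ K ∧ ∀ V, IsWeakStarOpen V → x ∈ V → ¬ Cov ε (K ∩ V)} with hLdef
  have hLK : L ⊆ K := fun x hx => hx.1
  -- the "separable part" K \ L is coverable
  have hcovKL : Cov ε (K \ L) := by
    rcases Set.eq_empty_or_nonempty (K \ L) with he | hne
    · rw [he]; exact cov_empty ε
    have hch : ∀ x : ↥(K \ L), ∃ V : Set (StrongDual ℝ E),
        IsWeakStarOpen V ∧ (x : StrongDual ℝ E) ∈ V ∧ Cov ε (K ∩ V) := by
      rintro ⟨x, hxK, hxL⟩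
      simp only [hLdef, Set.mem_setOf_eq, not_and, not_forall] at hxL
      obtain ⟨V, hV, hxV, hcov⟩ := hxL hxK
      exact ⟨V, hV, hxV, not_not.mp hcov⟩
    choose V hVopen hxV hVcov using hch
    choose D hDc hDsub using hVcov
    haveI : CompactSpace (StrongDual.toWeakDual '' K : Set (WeakDual ℝ E)) :=
      isCompact_iff_compactSpace.1 hKc
    haveI := hmetr
    haveI : SecondCountableTopology (StrongDual.toWeakDual '' K : Set (WeakDual ℝ E)) := by
      letI := TopologicalSpace.metrizableSpaceMetric
        (StrongDual.toWeakDual '' K : Set (WeakDual ℝ E))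
      set_option synthInstance.maxHeartbeats 1000000 in
      infer_instance
    set U : ↥(K \ L) → Set (StrongDual.toWeakDual '' K : Set (WeakDual ℝ E)) :=
      fun i => Subtype.val ⁻¹' (StrongDual.toWeakDual '' V i) with hUdef
    have hUopen : ∀ i, IsOpen (U i) := fun i => (hVopen i).preimage continuous_subtype_val
    obtain ⟨T, hTc, hTeq⟩ := TopologicalSpace.isOpen_iUnion_countable U hUopen
    refine ⟨⋃ i ∈ T, D i, hTc.biUnion fun i _ => hDc i, fun y hy => ?_⟩
    have hyS : StrongDual.toWeakDual y ∈ (StrongDual.toWeakDual '' K : Set (WeakDual ℝ E)) :=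
      ⟨y, hy.1, rfl⟩
    have hmem : (⟨StrongDual.toWeakDual y, hyS⟩ :
        ↥(StrongDual.toWeakDual '' K : Set (WeakDual ℝ E))) ∈ ⋃ i, U i :=
      Set.mem_iUnion.2 ⟨⟨y, hy⟩, ⟨y, hxV ⟨y, hy⟩, rfl⟩⟩
    rw [← hTeq] at hmem
    obtain ⟨i, hiT, hiU⟩ := Set.mem_iUnion₂.1 hmem
    obtain ⟨z, hzV, hz⟩ := hiU
    have hyV : y ∈ V i := by
      have : z = y := StrongDual.toWeakDual.injective hz
      rwa [← this]
    have := hDsub i ⟨hy.1, hyV⟩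
    obtain ⟨c, hc1, hc2⟩ := Set.mem_iUnion₂.1 this
    exact Set.mem_iUnion₂.2 ⟨c, Set.mem_iUnion₂.2 ⟨i, hiT, hc1⟩, hc2⟩
  -- hence L is not coverable; in particular nonempty
  have hKsub : K ⊆ L ∪ (K \ L) := by
    intro x hx
    by_cases h : x ∈ L
    · exact Or.inl h
    · exact Or.inr ⟨hx, h⟩
  have hLcov : ¬ Cov ε L := fun hL => hKcov (Cov.mono hKsub (hL.union hcovKL))
  have hLne : L.Nonempty := by
    rcases Set.eq_empty_or_nonempty L with he | h
    · exact absurd (show Cov ε L by rw [he]; exact cov_empty ε) hLcov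
    · exact h
  -- every relatively weak-* open slice of L is non-coverable, hence of diameter ≥ ε
  have key : ∀ x ∈ L, ∀ V : Set (StrongDual ℝ E), IsWeakStarOpen V → x ∈ V →
      ¬ Cov ε (L ∩ V) := by
    intro x hx V hV hxV hcov
    apply hx.2 V hV hxV
    refine Cov.mono ?_ (hcov.union hcovKL)
    intro z hz
    by_cases h : z ∈ L
    · exact Or.inl ⟨h, hz.2⟩
    · exact Or.inr ⟨hz.1, h⟩
  have hfix : L ⊆ szlenkDeriv (ε / 2) L := by
    intro x hx
    refine ⟨hx, fun V hV hxV => ?_⟩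
    have hnc := key x hx V hV hxV
    have hne : (L ∩ V).Nonempty := by
      rcases Set.eq_empty_or_nonempty (L ∩ V) with he | h
      · exact absurd (show Cov ε (L ∩ V) by rw [he]; exact cov_empty ε) hnc
      · exact h
    obtain ⟨c, hc⟩ := hne
    have hnot : ¬ (L ∩ V ⊆ Metric.ball c ε) := by
      intro hsub
      exact hnc ⟨{c}, Set.countable_singleton c, by simpa using hsub⟩
    obtain ⟨y, hyLV, hyc⟩ := Set.not_subset.mp hnot
    have hdist : ε ≤ dist y c := not_lt.mp fun h => hyc (Metric.mem_ball.2 h)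
    have hb : Bornology.IsBounded (L ∩ V) :=
      hKb.subset (Set.inter_subset_left.trans hLK)
    calc ε / 2 < ε := half_lt_self hε
      _ ≤ dist y c := hdist
      _ ≤ Metric.diam (L ∩ V) := Metric.dist_le_diam_of_mem hb hyLV hc
  exact ⟨ε / 2, half_pos hε,
    hLne.mono (subset_szlenkIter hKb hLK hfix α)⟩
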